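/- arXiv:1301.3967 — 2 statements merged into one kernel-verified Lean document; each statement's English description precedes it below -/
import Mathlib

section
/- Let f : A → B be a homomorphism of Noetherian commutative rings and let I be a radical ideal of A with primary decomposition I = 𝔭₁ ∩ ⋯ ∩ 𝔭ᵣ by its associated prime ideals. If the extension IB is a radical ideal of B, then IB = 𝔭₁B ∩ ⋯ ∩ 𝔭ᵣB. -/
namespace Ideal

variable {R S : Type*} [CommSemiring R] [CommSemiring S]

theorem iInf_le_radical_prod {ι : Type*} [Fintype ι] (J : ι → Ideal R) :
    ⨅ i, J i ≤ radical (∏ i, J i) := fun x hx =>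
  ⟨Fintype.card ι, by
    simpa using prod_mem_prod (s := Finset.univ) (x := fun _ => x) fun i _ => mem_iInf.mp hx i⟩

theorem map_iInf_of_isRadical {ι : Type*} [Fintype ι] (f : R →+* S) (J : ι → Ideal R)
    (h : (map f (⨅ i, J i)).IsRadical) : map f (⨅ i, J i) = ⨅ i, map f (J i) := by
  refine le_antisymm (le_iInf fun i => map_mono (iInf_le J i)) ?_
  calc ⨅ i, map f (J i)
      ≤ radical (∏ i, map f (J i)) := iInf_le_radical_prod _
    _ = radical (map f (∏ i, J i)) := by rw [← mapHom_apply, map_prod]; rfl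
    _ ≤ map f (⨅ i, J i) := by
      refine h.radical_le_iff.mpr (map_mono ?_)
      rw [← Finset.inf_univ_eq_iInf]
      exact prod_le_inf

end Ideal

theorem radical_extension_inf_general {A B : Type*} [CommRing A] [CommRing B]
    (f : A →+* B) (I : Ideal A)
    (r : ℕ) (𝔭 : Fin r → Ideal A)
    (hdec : I = ⨅ i, 𝔭 i)
    (hrad : (I.map f).IsRadical) :
    I.map f = ⨅ i, (𝔭 i).map f := by
  subst hdec
  exact Ideal.map_iInf_of_isRadical f 𝔭 hrad

/-- Let `f : A → B` be a homomorphism of Noetherian rings and `I` a radical ideal of `A` with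
(irredundant) primary decomposition `I = 𝔭₁ ∩ ⋯ ∩ 𝔭ᵣ` by its associated (= minimal) primes.
If `IB` is a radical ideal of `B`, then `IB = 𝔭₁B ∩ ⋯ ∩ 𝔭ᵣB`. -/
theorem radical_extension_inf {A B : Type*} [CommRing A] [CommRing B]
    [IsNoetherianRing A] [IsNoetherianRing B]
    (f : A →+* B) (I : Ideal A) (hI : I.IsRadical)
    (r : ℕ) (𝔭 : Fin r → Ideal A) (hprime : ∀ i, (𝔭 i).IsPrime)
    (hdec : I = ⨅ i, 𝔭 i)
    (hirr : ∀ i, ¬ (⨅ j ∈ ({i}ᶜ : Set (Fin r)), 𝔭 j) ≤ 𝔭 i)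
    (hrad : (I.map f).IsRadical) :
    I.map f = ⨅ i, (𝔭 i).map f :=
  radical_extension_inf_general f I r 𝔭 hdec hrad
end

section
/- The ring R = k[x, z, t]/(xz, xt) is an algebra retract of the Gorenstein ring S = k[x, y, z, t, w]/(xz, xt, yt, yw, zw) (the Stanley-Reisner ring of the pentagon), via the inclusion of variables with retraction sending y and w to 0. -/
open MvPolynomial

theorem Ideal.quotientMap_comp_quotientMap_of_comp_eq_id {R S : Type*} [CommRing R]
    [CommRing S] {I : Ideal R} {J : Ideal S} {f : R →+* S} {g : S →+* R}
    (hf : I ≤ J.comap f) (hg : J ≤ I.comap g) (hgf : g.comp f = RingHom.id R) :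
    (Ideal.quotientMap I g hg).comp (Ideal.quotientMap J f hf) = RingHom.id (R ⧸ I) :=
  Ideal.Quotient.ringHom_ext <| RingHom.ext fun x => by
    simp [← RingHom.comp_apply g f, hgf]

namespace Pentagon

variable (k : Type*) [CommRing k]

/-- The variables of `R` are `x, z, t` (indices `0, 1, 2`), those of `S` are `x, y, z, t, w`
(indices `0, …, 4`). -/
noncomputable abbrev idealR : Ideal (MvPolynomial (Fin 3) k) := Ideal.span {X 0 * X 1, X 0 * X 2}

noncomputable abbrev idealS : Ideal (MvPolynomial (Fin 5) k) :=
  Ideal.span {X 0 * X 2, X 0 * X 3, X 1 * X 3, X 1 * X 4, X 2 * X 4}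

noncomputable abbrev inclusion : MvPolynomial (Fin 3) k →ₐ[k] MvPolynomial (Fin 5) k :=
  rename ![0, 2, 3]

noncomputable abbrev retraction : MvPolynomial (Fin 5) k →ₐ[k] MvPolynomial (Fin 3) k :=
  aeval ![X 0, 0, X 1, X 2, 0]

theorem retraction_comp_inclusion :
    (retraction k).comp (inclusion k) = AlgHom.id k (MvPolynomial (Fin 3) k) := by
  ext i
  fin_cases i <;> simp

theorem idealR_le_comap_inclusion : idealR k ≤ (idealS k).comap (inclusion k) := by
  refine Ideal.span_le.2 ?_
  simp only [Set.insert_subset_iff, Set.singleton_subset_iff, SetLike.mem_coe, Ideal.mem_comap]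
  refine ⟨Ideal.subset_span ?_, Ideal.subset_span ?_⟩ <;> simp

-- Edges through `y` or `w` go to `0`, the other edges `xz, xt` to the generators of `idealR`.
theorem idealS_le_comap_retraction : idealS k ≤ (idealR k).comap (retraction k) := by
  refine Ideal.span_le.2 ?_
  simp only [Set.insert_subset_iff, Set.singleton_subset_iff, SetLike.mem_coe, Ideal.mem_comap]
  refine ⟨Ideal.subset_span ?_, Ideal.subset_span ?_, ?_, ?_, ?_⟩ <;> simp

end Pentagon

open Pentagon in
/-- The ring `R = k[x,z,t]/(xz, xt)` is an algebra retract of the Stanley-Reisner ring of the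
pentagon `S = k[x,y,z,t,w]/(xz, xt, yt, yw, zw)`, via the inclusion of the variables `x,z,t`,
with retraction sending `y` and `w` to `0`.  (Variables of `S` are indexed `0=x, 1=y, 2=z,
3=t, 4=w`; variables of `R` are indexed `0=x, 1=z, 2=t`, included via `![0,2,3]`.) -/
theorem pentagon_retract (k : Type*) [Field k] :
    ∃ (θ : MvPolynomial (Fin 3) k ⧸
            (Ideal.span {X 0 * X 1, X 0 * X 2} : Ideal (MvPolynomial (Fin 3) k)) →+*
          MvPolynomial (Fin 5) k ⧸
            (Ideal.span {X 0 * X 2, X 0 * X 3, X 1 * X 3, X 1 * X 4, X 2 * X 4} :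
              Ideal (MvPolynomial (Fin 5) k)))
      (φ : MvPolynomial (Fin 5) k ⧸
            (Ideal.span {X 0 * X 2, X 0 * X 3, X 1 * X 3, X 1 * X 4, X 2 * X 4} :
              Ideal (MvPolynomial (Fin 5) k)) →+*
          MvPolynomial (Fin 3) k ⧸
            (Ideal.span {X 0 * X 1, X 0 * X 2} : Ideal (MvPolynomial (Fin 3) k))),
      (∀ c : k, θ (Ideal.Quotient.mk _ (C c)) = Ideal.Quotient.mk _ (C c)) ∧
      (∀ i : Fin 3, θ (Ideal.Quotient.mk _ (X i)) =
        Ideal.Quotient.mk _ (X (![0, 2, 3] i))) ∧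
      Function.Injective θ ∧
      φ.comp θ = RingHom.id _ ∧
      (∀ c : k, φ (Ideal.Quotient.mk _ (C c)) = Ideal.Quotient.mk _ (C c)) ∧
      (∀ i : Fin 3, φ (Ideal.Quotient.mk _ (X (![0, 2, 3] i))) =
        Ideal.Quotient.mk _ (X i)) ∧
      φ (Ideal.Quotient.mk _ (X 1)) = 0 ∧
      φ (Ideal.Quotient.mk _ (X 4)) = 0 := by
  set θ := Ideal.quotientMap _ (inclusion k).toRingHom (idealR_le_comap_inclusion k)
  set φ := Ideal.quotientMap _ (retraction k).toRingHom (idealS_le_comap_retraction k)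
  have hφθ : φ.comp θ = RingHom.id _ := Ideal.quotientMap_comp_quotientMap_of_comp_eq_id _ _
    (congrArg AlgHom.toRingHom (retraction_comp_inclusion k))
  refine ⟨θ, φ, fun c => by simp [θ], fun i => by simp [θ],
    Function.LeftInverse.injective (g := φ) (RingHom.congr_fun hφθ), hφθ, fun c => by simp [φ],
    fun i => by fin_cases i <;> simp [φ], by simp [φ], by simp [φ]⟩
end
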